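/- Assume the optimality set OPT(b) of (P_b) is non-empty and bounded. Let I_1, …, I_K enumerate all bases that are both primal feasible and dual feasible, and define the equivalence relation j ~ k iff x(I_j, b) = x(I_k, b) on {1,…,K}, with equivalence classes B_1, …, B_T. Then there exists ε > 0 such that for every b̃ ∈ ℝ^m with P(b̃) ≠ ∅ and ‖b̃ − b‖ < ε, and for every class index 1 ≤ t ≤ T, there exists k ∈ B_t with x(I_k, b̃) ∈ OPT(b̃). -/

import Mathlib

open Matrix

noncomputable section

variable {m d : ℕ}

/-- The primal feasible set `P(b) = {x : A x = b, x ≥ 0}`. -/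
def feasSet (A : Matrix (Fin m) (Fin d) ℝ) (b : Fin m → ℝ) : Set (Fin d → ℝ) :=
  {x | A *ᵥ x = b ∧ ∀ i, 0 ≤ x i}

/-- The optimality set `OPT(b)` of the primal program `(P_b)`. -/
def optSet (A : Matrix (Fin m) (Fin d) ℝ) (b : Fin m → ℝ) (c : Fin d → ℝ) :
    Set (Fin d → ℝ) :=
  {x | x ∈ feasSet A b ∧ ∀ y ∈ feasSet A b, c ⬝ᵥ x ≤ c ⬝ᵥ y}

/-- The dual feasible set `{λ : Aᵀ λ ≤ c}`. -/
def dualFeasSet (A : Matrix (Fin m) (Fin d) ℝ) (c : Fin d → ℝ) : Set (Fin m → ℝ) :=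
  {l | ∀ j, (Aᵀ *ᵥ l) j ≤ c j}

/-- The set of optimal solutions of the dual program `(D_b)`. -/
def dualOptSet (A : Matrix (Fin m) (Fin d) ℝ) (b : Fin m → ℝ) (c : Fin d → ℝ) :
    Set (Fin m → ℝ) :=
  {l | l ∈ dualFeasSet A c ∧ ∀ mu ∈ dualFeasSet A c, b ⬝ᵥ mu ≤ b ⬝ᵥ l}

/-- The submatrix `A_I` of the columns indexed by `I`, where the subset
`I ⊆ {1,…,d}` of cardinality `m` is encoded by the strictly monotone
enumeration `e : Fin m → Fin d` of its elements. -/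
def subMat (A : Matrix (Fin m) (Fin d) ℝ) (e : Fin m → Fin d) :
    Matrix (Fin m) (Fin m) ℝ :=
  A.submatrix id e

/-- `e` encodes a basis: a subset of size `m` of the columns (strictly monotone
enumeration) whose corresponding submatrix `A_I` is invertible. -/
def IsBasis (A : Matrix (Fin m) (Fin d) ℝ) (e : Fin m → Fin d) : Prop :=
  StrictMono e ∧ IsUnit (subMat A e).det

/-- The primal basic solution `x(I, v)`: equal to `(A_I)⁻¹ v` on the coordinates
in `I` and `0` elsewhere. -/
def basicSol (A : Matrix (Fin m) (Fin d) ℝ) (e : Fin m → Fin d) (v : Fin m → ℝ) :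
    Fin d → ℝ :=
  fun i => ∑ j, if e j = i then ((subMat A e)⁻¹ *ᵥ v) j else 0

/-- The dual basic solution `λ(I) = (A_I)⁻ᵀ c_I`. -/
def dualSol (A : Matrix (Fin m) (Fin d) ℝ) (c : Fin d → ℝ) (e : Fin m → Fin d) :
    Fin m → ℝ :=
  ((subMat A e)ᵀ)⁻¹ *ᵥ fun j => c (e j)

/-- `I` is a dual feasible basis: `Aᵀ λ(I) ≤ c`. -/
def DualFeasibleBasis (A : Matrix (Fin m) (Fin d) ℝ) (c : Fin d → ℝ)
    (e : Fin m → Fin d) : Prop :=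
  IsBasis A e ∧ ∀ j, (Aᵀ *ᵥ dualSol A c e) j ≤ c j

/-- `I` is a primal feasible basis for `(P_b)`: `x(I,b) ≥ 0`. -/
def PrimalFeasibleBasis (A : Matrix (Fin m) (Fin d) ℝ) (b : Fin m → ℝ)
    (e : Fin m → Fin d) : Prop :=
  IsBasis A e ∧ ∀ i, 0 ≤ basicSol A e b i

/-!
Fix a primal and dual feasible basis `e`, put `x = x(e, b)` and `S = supp x`, and consider the
program `min cᵀy` subject to `A y = b̃`, with `y` free on `S` and nonnegative elsewhere. Its dual
feasible set consists of the `μ` with `Aᵀμ ≤ c` that are tight on `S`. It contains `λ(e)`, and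
weak duality bounds `b̃ᵀμ` on it as soon as `P(b̃) ≠ ∅`. Moving along directions that keep the
active constraints tight shows that `b̃ᵀμ` is maximised at a dual vertex `μ`. Farkas' lemma
(whose finitely generated cone is closed by a Carathéodory argument) then writes `b̃ = A y` with
`y` supported on the active set of `μ`, free on `S` and nonnegative off `S`. Carathéodory once
more, followed by a basis extension (the active columns span, `μ` being a vertex), turns
`supp y ∪ S` into a basis `I` of active columns. Hence `λ(I) = μ` is dual feasible, `x(I, b) = x`
and `x(I, b̃) ≥ 0` off `S`. On `S` we have `x(I, b̃) > 0` once `b̃` is close to `b`, because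
`x > 0` there and there are only finitely many bases. Complementary slackness then makes
`x(I, b̃)` optimal.
-/

open Set Function Topology

theorem exists_ratio_test {ι : Type*} [Finite ι] (K : Set ι) (s r : ι → ℝ)
    (hs : ∀ i ∈ K, 0 ≤ s i) (hr : ∃ i ∈ K, 0 < r i) :
    ∃ t, 0 ≤ t ∧ (∀ i ∈ K, t * r i ≤ s i) ∧ ∃ i ∈ K, 0 < r i ∧ t * r i = s i := by
  obtain ⟨i₀, ⟨hi₀, hri₀⟩, hmin⟩ :=
    exists_min_image {i | i ∈ K ∧ 0 < r i} (fun i => s i / r i) (toFinite _) hr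
  have ht : 0 ≤ s i₀ / r i₀ := div_nonneg (hs i₀ hi₀) hri₀.le
  refine ⟨s i₀ / r i₀, ht, fun i hi => ?_, i₀, hi₀, hri₀, div_mul_cancel₀ _ hri₀.ne'⟩
  rcases le_or_gt (r i) 0 with hri | hri
  · exact (mul_nonpos_of_nonneg_of_nonpos ht hri).trans (hs i hi)
  · exact (le_div_iff₀ hri).1 (hmin i ⟨hi, hri⟩)

section MixedCone

variable {ι V : Type*} [Fintype ι] [AddCommGroup V] [Module ℝ V] {g : ι → V} {S T : Set ι}

theorem exists_pos_relation_of_not_linearIndepOn (hS : LinearIndepOn ℝ g S)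
    (hT : ¬LinearIndepOn ℝ g T) :
    ∃ l : ι → ℝ, support l ⊆ T ∧ ∑ i, l i • g i = 0 ∧ ∃ i ∉ S, 0 < l i := by
  obtain ⟨f, hfT, hf, hf0⟩ := linearDepOn_iff'.1 hT
  rw [Finsupp.mem_supported, ← Finsupp.fun_support_eq] at hfT
  rw [Finsupp.linearCombination_apply, Finsupp.sum_fintype _ _ (by simp)] at hf
  obtain ⟨i, hiS, hfi⟩ : ∃ i ∉ S, f i ≠ 0 := by
    by_contra! h
    exact hf0 (linearIndepOn_iff.1 hS f ((Finsupp.mem_supported' ℝ f).2 h) (by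
      rwa [Finsupp.linearCombination_apply, Finsupp.sum_fintype _ _ (by simp)]))
  rcases hfi.lt_or_gt with hneg | hpos
  · exact ⟨-f, by simpa using hfT, by simp [neg_smul, hf], i, hiS, by simpa using hneg⟩
  · exact ⟨f, hfT, hf, i, hiS, hpos⟩

theorem exists_linearIndepOn_sum_eq (hS : LinearIndepOn ℝ g S) (w : ι → ℝ)
    (hw : ∀ i ∉ S, 0 ≤ w i) :
    ∃ w' : ι → ℝ, (∀ i ∉ S, 0 ≤ w' i) ∧ support w' ⊆ S ∪ support w ∧
      LinearIndepOn ℝ g (S ∪ support w') ∧ ∑ i, w' i • g i = ∑ i, w i • g i := by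
  induction h : (support w \ S).ncard using Nat.strong_induction_on generalizing w with
  | _ n ih =>
  by_cases hind : LinearIndepOn ℝ g (S ∪ support w)
  · exact ⟨w, hw, subset_union_right, hind, rfl⟩
  obtain ⟨l, hlT, hl, i, hiS, hli⟩ := exists_pos_relation_of_not_linearIndepOn hS hind
  obtain ⟨t, -, hle, i₀, hi₀S, hli₀, hti₀⟩ := exists_ratio_test Sᶜ w l hw ⟨i, hiS, hli⟩
  set w₁ : ι → ℝ := fun j => w j - t * l j
  have hsupp : support w₁ ⊆ S ∪ support w :=
    (support_sub _ _).trans <| union_subset subset_union_right <|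
      (support_mul_subset_right _ _).trans hlT
  have hlt : (support w₁ \ S).ncard < n := by
    have hsub : support w₁ \ S ⊆ support w \ S :=
      fun j hj => ⟨(hsupp hj.1).resolve_left hj.2, hj.2⟩
    rw [← h]
    refine ncard_lt_ncard ((ssubset_iff_of_subset hsub).2 ⟨i₀, ⟨?_, hi₀S⟩, ?_⟩)
    · exact (hlT hli₀.ne').resolve_left hi₀S
    · simp [w₁, hti₀]
  obtain ⟨w', hw'0, hw'supp, hind', hsum⟩ :=
    ih _ hlt w₁ (fun j hj => sub_nonneg.2 (hle j hj)) rfl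
  refine ⟨w', hw'0, hw'supp.trans (union_subset subset_union_left hsupp), hind', hsum.trans ?_⟩
  simp [w₁, sub_smul, Finset.sum_sub_distrib, mul_smul, ← Finset.smul_sum, hl]

def mixedCone (g : ι → V) (S Z : Set ι) : PointedCone ℝ V where
  carrier := {v | ∃ w : ι → ℝ, support w ⊆ S ∪ Z ∧ (∀ i ∉ S, 0 ≤ w i) ∧ ∑ i, w i • g i = v}
  add_mem' := by
    rintro _ _ ⟨w, hw, hw0, rfl⟩ ⟨w', hw', hw'0, rfl⟩
    exact ⟨w + w', (support_add _ _).trans (union_subset hw hw'),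
      fun i hi => add_nonneg (hw0 i hi) (hw'0 i hi), by simp [add_smul, Finset.sum_add_distrib]⟩
  zero_mem' := ⟨0, by simp, fun _ _ => le_rfl, by simp⟩
  smul_mem' := by
    rintro ⟨a, ha⟩ _ ⟨w, hw, hw0, rfl⟩
    exact ⟨a • w, (support_const_smul_subset a w).trans hw, fun i hi => mul_nonneg ha (hw0 i hi),
      by simp [Finset.smul_sum, mul_smul]⟩

theorem smul_mem_mixedCone {Z : Set ι} {i : ι} {a : ℝ} (hi : i ∈ S ∪ Z) (ha : i ∉ S → 0 ≤ a) :
    a • g i ∈ mixedCone g S Z := by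
  classical
  refine ⟨Pi.single i a, Pi.support_single_subset.trans (singleton_subset_iff.2 hi),
    fun j hj => ?_, by simp [Pi.single_apply]⟩
  by_cases hji : j = i
  · subst hji
    simpa using ha hj
  · simp [hji]

theorem sum_subtype_eq_sum_of_support_subset {M : Type*} [AddCommMonoid M] {F : Set ι}
    [Fintype F] {f : ι → M} (hf : support f ⊆ F) : ∑ i : F, f i = ∑ i, f i := by
  classical
  rw [← Finset.sum_subtype (p := (· ∈ F)) (Finset.univ.filter (· ∈ F)) (by simp) f,
    Finset.sum_filter_of_ne fun i _ hi => by simpa using hf hi]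

theorem coe_mixedCone_eq_biUnion (hS : LinearIndepOn ℝ g S) (Z : Set ι) :
    (mixedCone g S Z : Set V) = ⋃ F ∈ {F : Finset ι | ↑F ⊆ S ∪ Z ∧ LinearIndepOn ℝ g F},
      Fintype.linearCombination ℝ (fun i : F => g i) '' {a | ∀ i : F, (i : ι) ∉ S → 0 ≤ a i} := by
  classical
  ext v
  simp only [mem_iUnion, mem_image, mem_ofPred_eq, exists_prop, Fintype.linearCombination_apply]
  constructor
  · rintro ⟨w, hwZ, hw0, rfl⟩
    obtain ⟨w', hw'0, hw'supp, hind, hsum⟩ := exists_linearIndepOn_sum_eq hS w hw0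
    refine ⟨(S ∪ support w').toFinset, ⟨?_, by simpa using hind⟩, fun i => w' i,
      fun i hi => hw'0 i hi, ?_⟩
    · simpa using union_subset subset_union_left
        (hw'supp.trans (union_subset subset_union_left hwZ))
    · rw [← hsum]
      exact sum_subtype_eq_sum_of_support_subset
        ((support_smul_subset_left _ _).trans (by simp))
  · rintro ⟨F, ⟨hFZ, -⟩, a, ha, rfl⟩
    let w : ι → ℝ := fun i => if h : i ∈ F then a ⟨i, h⟩ else 0
    have hwF : support w ⊆ F := fun i hi => by_contra fun h => hi (dif_neg h)
    refine ⟨w, hwF.trans hFZ, fun i hi => ?_, ?_⟩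
    · by_cases h : i ∈ F
      · simpa [w, h] using ha ⟨i, h⟩ hi
      · simp [w, h]
    · rw [← sum_subtype_eq_sum_of_support_subset (f := fun i => w i • g i)
        ((support_smul_subset_left _ _).trans hwF)]
      simp [w]

theorem isClosed_mixedCone [TopologicalSpace V] [IsTopologicalAddGroup V] [ContinuousSMul ℝ V]
    [T2Space V] (hS : LinearIndepOn ℝ g S) (Z : Set ι) : IsClosed (mixedCone g S Z : Set V) := by
  classical
  rw [coe_mixedCone_eq_biUnion hS Z]
  refine (toFinite _).isClosed_biUnion fun F hF => ?_
  refine (LinearMap.isClosedEmbedding_of_injective ?_).isClosedMap _ ?_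
  · exact LinearMap.ker_eq_bot.2 (linearIndependent_iff_injective_fintypeLinearCombination.1 hF.2)
  · simp only [ofPred_forall]
    exact isClosed_iInter fun i => isClosed_iInter fun _ =>
      isClosed_le continuous_const (continuous_apply i)

end MixedCone

section DotProduct

variable {n k : Type*}

theorem exists_dotProduct_eq [Fintype n] [DecidableEq n] (f : (n → ℝ) →ₗ[ℝ] ℝ) :
    ∃ u : n → ℝ, ∀ x, f x = u ⬝ᵥ x :=
  ⟨fun i => f fun j => if i = j then 1 else 0, fun x => by
    simp [f.pi_apply_eq_sum_univ x, dotProduct, mul_comm]⟩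

theorem dotProduct_nonpos_of_forall_add_smul_mem [Fintype n] {T : Set (n → ℝ)} {v μ u : n → ℝ}
    {B : ℝ} (hbdd : ∀ ν ∈ T, v ⬝ᵥ ν ≤ B) (hray : ∀ t : ℝ, 0 ≤ t → μ + t • u ∈ T) : v ⬝ᵥ u ≤ 0 := by
  by_contra! h
  have hμ := hbdd _ (by simpa using hray 0 le_rfl)
  have := hbdd _ (hray ((B - v ⬝ᵥ μ) / (v ⬝ᵥ u) + 1) (by positivity))
  rw [dotProduct_add, dotProduct_smul, smul_eq_mul, add_mul, div_mul_cancel₀ _ h.ne'] at this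
  linarith

theorem mulVec_eq_sum_smul_col [Fintype n] (A : Matrix k n ℝ) (w : n → ℝ) :
    A *ᵥ w = ∑ j, w j • A.col j := by
  ext i
  simp [mulVec, dotProduct, mul_comm]

theorem transpose_mulVec_apply [Fintype k] (A : Matrix k n ℝ) (u : k → ℝ) (j : n) :
    (Aᵀ *ᵥ u) j = u ⬝ᵥ A.col j :=
  dotProduct_comm _ _

theorem mulVec_dotProduct [Fintype n] [Fintype k] (A : Matrix k n ℝ) (x : n → ℝ) (μ : k → ℝ) :
    (A *ᵥ x) ⬝ᵥ μ = x ⬝ᵥ (Aᵀ *ᵥ μ) := by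
  rw [dotProduct_comm, dotProduct_mulVec, mulVec_transpose, dotProduct_comm]

end DotProduct

section LinearProgram

variable {A : Matrix (Fin m) (Fin d) ℝ} {c : Fin d → ℝ} {e : Fin m → Fin d}

theorem weak_duality {v : Fin m → ℝ} {x : Fin d → ℝ} {μ : Fin m → ℝ} (hx : x ∈ feasSet A v)
    (hμ : μ ∈ dualFeasSet A c) : v ⬝ᵥ μ ≤ c ⬝ᵥ x := by
  rw [← hx.1, mulVec_dotProduct, dotProduct_comm c]
  exact Finset.sum_le_sum fun j _ => mul_le_mul_of_nonneg_left (hμ j) (hx.2 j)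

theorem dotProduct_eq_of_complementary_slackness {x : Fin d → ℝ} {μ : Fin m → ℝ}
    (hx : ∀ j, x j ≠ 0 → (Aᵀ *ᵥ μ) j = c j) : c ⬝ᵥ x = (A *ᵥ x) ⬝ᵥ μ := by
  rw [mulVec_dotProduct, dotProduct_comm]
  refine Finset.sum_congr rfl fun j _ => ?_
  by_cases h : x j = 0
  · simp [h]
  · rw [hx j h]

theorem support_basicSol_subset (A : Matrix (Fin m) (Fin d) ℝ) (e : Fin m → Fin d)
    (v : Fin m → ℝ) : support (basicSol A e v) ⊆ range e := by
  intro i hi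
  by_contra h
  exact hi (Finset.sum_eq_zero fun j _ => if_neg fun hj => h ⟨j, hj⟩)

theorem basicSol_comp (he : Injective e) (v : Fin m → ℝ) :
    basicSol A e v ∘ e = (subMat A e)⁻¹ *ᵥ v :=
  funext fun k => by simp [basicSol, he.eq_iff]

theorem mulVec_eq_subMat_mulVec (he : Injective e) {x : Fin d → ℝ} (hx : support x ⊆ range e) :
    A *ᵥ x = subMat A e *ᵥ (x ∘ e) := by
  rw [mulVec_eq_sum_smul_col, mulVec_eq_sum_smul_col]
  refine (Fintype.sum_of_injective e he _ _ (fun j hj => ?_) fun k => rfl).symm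
  rw [notMem_support.1 fun h => hj (hx h), zero_smul]

theorem mulVec_basicSol (hb : IsBasis A e) (v : Fin m → ℝ) : A *ᵥ basicSol A e v = v := by
  rw [mulVec_eq_subMat_mulVec hb.1.injective (support_basicSol_subset A e v),
    basicSol_comp hb.1.injective, mulVec_mulVec, mul_nonsing_inv _ hb.2, one_mulVec]

theorem eq_basicSol (hb : IsBasis A e) {x : Fin d → ℝ} (hx : support x ⊆ range e) :
    x = basicSol A e (A *ᵥ x) := by
  ext i
  by_cases hi : i ∈ range e
  · obtain ⟨k, rfl⟩ := hi
    rw [← Function.comp_apply (f := basicSol A e _), basicSol_comp hb.1.injective,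
      mulVec_eq_subMat_mulVec hb.1.injective hx, mulVec_mulVec, nonsing_inv_mul _ hb.2,
      one_mulVec, Function.comp_apply]
  · rw [notMem_support.1 fun h => hi (hx h),
      notMem_support.1 fun h => hi (support_basicSol_subset A e _ h)]

theorem isBasis_iff (he : StrictMono e) : IsBasis A e ↔ LinearIndepOn ℝ A.col (range e) := by
  rw [IsBasis, linearIndepOn_range_iff he.injective, ← isUnit_iff_isUnit_det,
    ← linearIndependent_cols_iff_isUnit]
  exact and_iff_right he

theorem IsBasis.injective_transpose_mulVec (hb : IsBasis A e) : Injective Aᵀ.mulVec := by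
  intro u u' h
  have hsub : (subMat A e)ᵀ *ᵥ u = (subMat A e)ᵀ *ᵥ u' := funext fun k => congrFun h (e k)
  exact mulVec_injective_iff_isUnit.2
    ((isUnit_transpose _).2 ((isUnit_iff_isUnit_det _).2 hb.2)) hsub

theorem transpose_mulVec_dualSol (hb : IsBasis A e) (k : Fin m) :
    (Aᵀ *ᵥ dualSol A c e) (e k) = c (e k) := by
  change ((subMat A e)ᵀ *ᵥ dualSol A c e) k = c (e k)
  rw [dualSol, mulVec_mulVec, mul_nonsing_inv _ (by rw [det_transpose]; exact hb.2), one_mulVec]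

theorem dualSol_eq (hb : IsBasis A e) {μ : Fin m → ℝ} (hμ : ∀ k, (Aᵀ *ᵥ μ) (e k) = c (e k)) :
    dualSol A c e = μ := by
  have h : (subMat A e)ᵀ *ᵥ μ = fun k => c (e k) := funext hμ
  rw [dualSol, ← h, mulVec_mulVec, nonsing_inv_mul _ (by rw [det_transpose]; exact hb.2),
    one_mulVec]

theorem basicSol_mem_optSet (hD : DualFeasibleBasis A c e) {v : Fin m → ℝ}
    (hx : ∀ i, 0 ≤ basicSol A e v i) : basicSol A e v ∈ optSet A v c := by
  have hfeas : basicSol A e v ∈ feasSet A v := ⟨mulVec_basicSol hD.1 v, hx⟩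
  refine ⟨hfeas, fun y hy => ?_⟩
  calc c ⬝ᵥ basicSol A e v = v ⬝ᵥ dualSol A c e := by
        rw [dotProduct_eq_of_complementary_slackness, hfeas.1]
        intro j hj
        obtain ⟨k, rfl⟩ := support_basicSol_subset A e v hj
        exact transpose_mulVec_dualSol hD.1 k
    _ ≤ c ⬝ᵥ y := weak_duality hy hD.2

def activeSet (A : Matrix (Fin m) (Fin d) ℝ) (c : Fin d → ℝ) (μ : Fin m → ℝ) : Set (Fin d) :=
  {j | (Aᵀ *ᵥ μ) j = c j}

def dualFace (A : Matrix (Fin m) (Fin d) ℝ) (c : Fin d → ℝ) (S : Set (Fin d)) :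
    Set (Fin m → ℝ) :=
  {μ | μ ∈ dualFeasSet A c ∧ S ⊆ activeSet A c μ}

/-- On the dual feasible set, these are the vertices. -/
def IsDualBasic (A : Matrix (Fin m) (Fin d) ℝ) (c : Fin d → ℝ) (μ : Fin m → ℝ) : Prop :=
  ∀ u, (∀ j ∈ activeSet A c μ, (Aᵀ *ᵥ u) j = 0) → u = 0

variable {S : Set (Fin d)} {v μ u : Fin m → ℝ} {B : ℝ}

theorem transpose_mulVec_add_smul_apply (μ u : Fin m → ℝ) (t : ℝ) (j : Fin d) :
    (Aᵀ *ᵥ (μ + t • u)) j = (Aᵀ *ᵥ μ) j + t * (Aᵀ *ᵥ u) j := by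
  simp [mulVec_add, mulVec_smul]

theorem mem_activeSet_add_smul {j : Fin d} (hj : j ∈ activeSet A c μ) (hu : (Aᵀ *ᵥ u) j = 0)
    (t : ℝ) : j ∈ activeSet A c (μ + t • u) := by
  simp only [activeSet, mem_ofPred_eq, transpose_mulVec_add_smul_apply, hu, mul_zero, add_zero]
  exact hj

theorem exists_pos_add_smul_mem_dualFeasSet (hμ : μ ∈ dualFeasSet A c)
    (hu : ∀ j ∈ activeSet A c μ, (Aᵀ *ᵥ u) j ≤ 0) :
    ∃ t : ℝ, 0 < t ∧ μ + t • u ∈ dualFeasSet A c ∧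
      ((∃ j, 0 < (Aᵀ *ᵥ u) j) → ∃ j, 0 < (Aᵀ *ᵥ u) j ∧ j ∈ activeSet A c (μ + t • u)) := by
  by_cases hpos : ∃ j, 0 < (Aᵀ *ᵥ u) j
  · obtain ⟨t, -, hle, j, -, hj, hjt⟩ := exists_ratio_test univ (fun j => c j - (Aᵀ *ᵥ μ) j)
      (Aᵀ *ᵥ u) (fun j _ => sub_nonneg.2 (hμ j)) (by simpa using hpos)
    have hslack : 0 < c j - (Aᵀ *ᵥ μ) j :=
      sub_pos.2 ((hμ j).lt_of_ne fun h => (hu j h).not_gt hj)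
    refine ⟨t, pos_of_mul_pos_left (hjt ▸ hslack) hj.le, fun i => ?_, fun _ => ⟨j, hj, ?_⟩⟩
    · rw [transpose_mulVec_add_smul_apply]
      linarith [hle i (mem_univ i)]
    · simp only [activeSet, mem_ofPred_eq, transpose_mulVec_add_smul_apply]
      linarith
  · push Not at hpos
    refine ⟨1, one_pos, fun i => ?_, fun ⟨j, hj⟩ => absurd hj (hpos j).not_gt⟩
    rw [transpose_mulVec_add_smul_apply]
    linarith [hμ i, hpos i]

theorem exists_improving_direction (hA : Injective Aᵀ.mulVec)
    (hbdd : ∀ ν ∈ dualFace A c S, v ⬝ᵥ ν ≤ B) (hμ : μ ∈ dualFace A c S)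
    (hnb : ¬IsDualBasic A c μ) :
    ∃ u, (∀ j ∈ activeSet A c μ, (Aᵀ *ᵥ u) j = 0) ∧ 0 ≤ v ⬝ᵥ u ∧ ∃ j, 0 < (Aᵀ *ᵥ u) j := by
  simp only [IsDualBasic, not_forall] at hnb
  obtain ⟨u, hu, hu0⟩ := hnb
  wlog hvu : 0 ≤ v ⬝ᵥ u generalizing u
  · exact this (-u) (by simpa [mulVec_neg] using hu) (neg_ne_zero.2 hu0)
      (by rw [dotProduct_neg]; linarith)
  by_cases hpos : ∃ j, 0 < (Aᵀ *ᵥ u) j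
  · exact ⟨u, hu, hvu, hpos⟩
  push Not at hpos
  -- Then the whole ray `μ + t • u` is feasible, so boundedness forces `v ⬝ᵥ u ≤ 0` and `-u` works.
  have hvu' : v ⬝ᵥ u ≤ 0 := dotProduct_nonpos_of_forall_add_smul_mem hbdd fun t ht =>
    ⟨fun j => by rw [transpose_mulVec_add_smul_apply]; nlinarith [hμ.1 j, hpos j],
      fun j hj => mem_activeSet_add_smul (hμ.2 hj) (hu j (hμ.2 hj)) t⟩
  obtain ⟨j, hj⟩ : ∃ j, (Aᵀ *ᵥ u) j ≠ 0 := by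
    by_contra! h
    exact hu0 (hA (by rw [mulVec_zero]; exact funext h))
  refine ⟨-u, by simpa [mulVec_neg] using hu, by rw [dotProduct_neg]; linarith, j, ?_⟩
  rw [mulVec_neg, Pi.neg_apply, neg_pos]
  exact (hpos j).lt_of_ne hj

theorem exists_isDualBasic_le (hA : Injective Aᵀ.mulVec)
    (hbdd : ∀ ν ∈ dualFace A c S, v ⬝ᵥ ν ≤ B) (hμ : μ ∈ dualFace A c S) :
    ∃ ν ∈ dualFace A c S, IsDualBasic A c ν ∧ v ⬝ᵥ μ ≤ v ⬝ᵥ ν := by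
  induction h : (activeSet A c μ)ᶜ.ncard using Nat.strong_induction_on generalizing μ with
  | _ n ih =>
  by_cases hb : IsDualBasic A c μ
  · exact ⟨μ, hμ, hb, le_rfl⟩
  obtain ⟨u, hu, hvu, hpos⟩ := exists_improving_direction hA hbdd hμ hb
  obtain ⟨t, ht, hfeas, hnew⟩ :=
    exists_pos_add_smul_mem_dualFeasSet hμ.1 fun j hj => (hu j hj).le
  obtain ⟨j, hj, hjt⟩ := hnew hpos
  have hsub : activeSet A c μ ⊆ activeSet A c (μ + t • u) :=
    fun i hi => mem_activeSet_add_smul hi (hu i hi) t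
  have hlt : (activeSet A c (μ + t • u))ᶜ.ncard < n := by
    rw [← h]
    exact ncard_lt_ncard (compl_lt_compl_iff_lt.2
      ((ssubset_iff_of_subset hsub).2 ⟨j, hjt, fun h => hj.ne' (hu j h)⟩))
  obtain ⟨ν, hν, hνb, hle⟩ := ih _ hlt ⟨hfeas, hμ.2.trans hsub⟩ rfl
  refine ⟨ν, hν, hνb, le_trans ?_ hle⟩
  rw [dotProduct_add, dotProduct_smul, smul_eq_mul]
  nlinarith

theorem finite_setOf_isDualBasic (A : Matrix (Fin m) (Fin d) ℝ) (c : Fin d → ℝ) :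
    {μ | IsDualBasic A c μ}.Finite := by
  refine Finite.of_finite_image (f := activeSet A c) (toFinite _)
    fun μ hμ ν _ h => sub_eq_zero.1 (hμ _ fun j hj => ?_)
  have hj' : j ∈ activeSet A c ν := (h : activeSet A c μ = activeSet A c ν) ▸ hj
  simp only [mulVec_sub, Pi.sub_apply]
  rw [hj, hj', sub_self]

theorem exists_isDualBasic_isMaxOn (hA : Injective Aᵀ.mulVec)
    (hbdd : ∀ ν ∈ dualFace A c S, v ⬝ᵥ ν ≤ B) (hne : (dualFace A c S).Nonempty) :
    ∃ μ ∈ dualFace A c S, IsDualBasic A c μ ∧ IsMaxOn (v ⬝ᵥ ·) (dualFace A c S) μ := by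
  obtain ⟨μ₀, hμ₀⟩ := hne
  obtain ⟨ν₀, hν₀, hb₀, -⟩ := exists_isDualBasic_le hA hbdd hμ₀
  obtain ⟨μ, ⟨hμ, hμb⟩, hmax⟩ := exists_max_image (dualFace A c S ∩ {μ | IsDualBasic A c μ})
    (v ⬝ᵥ ·) ((finite_setOf_isDualBasic A c).inter_of_right _) ⟨ν₀, hν₀, hb₀⟩
  refine ⟨μ, hμ, hμb, isMaxOn_iff.2 fun ν hν => ?_⟩
  obtain ⟨ν', hν', hb', hle⟩ := exists_isDualBasic_le hA hbdd hν
  exact hle.trans (hmax ν' ⟨hν', hb'⟩)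

theorem mem_mixedCone_of_isMaxOn (hS : LinearIndepOn ℝ A.col S) (hμ : μ ∈ dualFace A c S)
    (hmax : IsMaxOn (v ⬝ᵥ ·) (dualFace A c S) μ) :
    v ∈ mixedCone A.col S (activeSet A c μ) := by
  by_contra hv
  obtain ⟨f, hf, hfv⟩ := ProperCone.hyperplane_separation_point
    ⟨mixedCone A.col S (activeSet A c μ), isClosed_mixedCone hS _⟩ hv
  obtain ⟨u, hu⟩ := exists_dotProduct_eq f.toLinearMap
  -- `-u` is a feasible direction at `μ` along which the objective increases.
  have hcol : ∀ j, (Aᵀ *ᵥ -u) j = -f (A.col j) := fun j => by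
    rw [mulVec_neg, Pi.neg_apply, transpose_mulVec_apply, ← hu]
    rfl
  have hZ : ∀ j ∈ activeSet A c μ, 0 ≤ f (A.col j) := fun j hj => by
    simpa using hf _ (smul_mem_mixedCone (a := 1) (subset_union_right hj) fun _ => zero_le_one)
  have hS' : ∀ j ∈ S, f (A.col j) = 0 := fun j hj => le_antisymm
    (by simpa using hf _ (smul_mem_mixedCone (a := -1) (subset_union_left hj) (absurd hj)))
    (hZ j (hμ.2 hj))
  obtain ⟨t, ht, hfeas, -⟩ := exists_pos_add_smul_mem_dualFeasSet hμ.1 (u := -u)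
    fun j hj => by rw [hcol]; linarith [hZ j hj]
  have hle := isMaxOn_iff.1 hmax _ ⟨hfeas, fun j hj =>
    mem_activeSet_add_smul (hμ.2 hj) (by rw [hcol, hS' j hj, neg_zero]) t⟩
  rw [dotProduct_add, dotProduct_smul, dotProduct_neg, dotProduct_comm v u, ← hu,
    smul_eq_mul] at hle
  nlinarith [show f.toLinearMap v = f v from rfl]

theorem span_image_col_eq_top {Z : Set (Fin d)}
    (hZ : ∀ u, (∀ j ∈ Z, (Aᵀ *ᵥ u) j = 0) → u = 0) : Submodule.span ℝ (A.col '' Z) = ⊤ := by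
  by_contra hne
  obtain ⟨f, hf0, hle⟩ := (Submodule.span ℝ (A.col '' Z)).exists_le_ker_of_lt_top
    (lt_top_iff_ne_top.2 hne)
  obtain ⟨u, hu⟩ := exists_dotProduct_eq f
  refine hf0 (LinearMap.ext fun x => ?_)
  rw [hu, hZ u fun j hj => ?_, zero_dotProduct, LinearMap.zero_apply]
  rw [transpose_mulVec_apply, ← hu]
  exact hle (Submodule.subset_span ⟨j, hj, rfl⟩)

theorem exists_isBasis_of_linearIndepOn {F Z : Set (Fin d)}
    (hZ : ∀ u, (∀ j ∈ Z, (Aᵀ *ᵥ u) j = 0) → u = 0) (hF : LinearIndepOn ℝ A.col F)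
    (hFZ : F ⊆ Z) : ∃ e, IsBasis A e ∧ F ⊆ range e ∧ range e ⊆ Z := by
  classical
  obtain ⟨J, hJZ, hFJ, hspan, hJ⟩ := exists_linearIndepOn_extension hF hFZ
  have htop : Submodule.span ℝ (A.col '' J) = ⊤ :=
    eq_top_iff.2 ((span_image_col_eq_top hZ).ge.trans (Submodule.span_le.2 hspan))
  have hcard : J.toFinset.card = m := by
    have := finrank_span_eq_card hJ
    rw [← image_eq_range, htop, finrank_top, Module.finrank_fin_fun] at this
    rw [toFinset_card]
    exact this.symm
  refine ⟨J.toFinset.orderEmbOfFin hcard, (isBasis_iff (OrderEmbedding.strictMono _)).2 ?_, ?_, ?_⟩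
  all_goals simpa [Finset.range_orderEmbOfFin]

theorem exists_dualFeasibleBasis_nonneg (hA : Injective Aᵀ.mulVec)
    (hS : LinearIndepOn ℝ A.col S) (hface : (dualFace A c S).Nonempty)
    (hv : (feasSet A v).Nonempty) :
    ∃ e, DualFeasibleBasis A c e ∧ S ⊆ range e ∧ ∀ j ∉ S, 0 ≤ basicSol A e v j := by
  obtain ⟨x, hx⟩ := hv
  obtain ⟨μ, hμ, hbasic, hmax⟩ :=
    exists_isDualBasic_isMaxOn hA (fun ν hν => weak_duality hx hν.1) hface
  obtain ⟨w, hwZ, hw0, hwv⟩ := mem_mixedCone_of_isMaxOn hS hμ hmax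
  obtain ⟨w', hw'0, hw'supp, hind, hw'v⟩ := exists_linearIndepOn_sum_eq hS w hw0
  have hSZ : S ∪ support w' ⊆ activeSet A c μ :=
    union_subset hμ.2 (hw'supp.trans (union_subset hμ.2 (hwZ.trans (union_subset hμ.2 subset_rfl))))
  obtain ⟨e, he, hSe, heZ⟩ := exists_isBasis_of_linearIndepOn hbasic hind hSZ
  have hw'e : w' = basicSol A e v := by
    rw [← hwv, ← hw'v, ← mulVec_eq_sum_smul_col]
    exact eq_basicSol he (subset_union_right.trans hSe)
  refine ⟨e, ⟨he, (dualSol_eq he fun k => heZ ⟨k, rfl⟩).symm ▸ hμ.1⟩,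
    subset_union_left.trans hSe, fun j hj => hw'e ▸ hw'0 j hj⟩

theorem eventually_basicSol_pos (A : Matrix (Fin m) (Fin d) ℝ) (b : Fin m → ℝ)
    (x : Fin d → ℝ) :
    ∀ᶠ v in 𝓝 b, ∀ e, basicSol A e b = x → ∀ i, 0 < x i → 0 < basicSol A e v i := by
  simp only [Filter.eventually_all]
  rintro e rfl i hi
  have hcont : Continuous fun v => basicSol A e v i :=
    continuous_finsetSum _ fun j _ => by split_ifs <;> fun_prop
  exact hcont.continuousAt.eventually (lt_mem_nhds hi)

theorem eventually_exists_optimal_basicSol {b : Fin m → ℝ} (hP : PrimalFeasibleBasis A b e)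
    (hD : DualFeasibleBasis A c e) :
    ∀ᶠ v in 𝓝 b, (feasSet A v).Nonempty → ∃ e', PrimalFeasibleBasis A b e' ∧
      DualFeasibleBasis A c e' ∧ basicSol A e' b = basicSol A e b ∧
      basicSol A e' v ∈ optSet A v c := by
  set x := basicSol A e b
  have hxe : support x ⊆ range e := support_basicSol_subset A e b
  have hface : dualSol A c e ∈ dualFace A c (support x) := ⟨hD.2, fun j hj => by
    obtain ⟨k, rfl⟩ := hxe hj
    exact transpose_mulVec_dualSol hP.1 k⟩
  have hS : LinearIndepOn ℝ A.col (support x) := ((isBasis_iff hP.1.1).1 hP.1).mono hxe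
  filter_upwards [eventually_basicSol_pos A b x] with v hpos hv
  obtain ⟨e', hD', hxe', hnn⟩ :=
    exists_dualFeasibleBasis_nonneg hP.1.injective_transpose_mulVec hS ⟨_, hface⟩ hv
  have hx' : basicSol A e' b = x := by
    rw [eq_basicSol hD'.1 hxe', mulVec_basicSol hP.1]
  refine ⟨e', ⟨hD'.1, hx' ▸ hP.2⟩, hD', hx', basicSol_mem_optSet hD' fun j => ?_⟩
  by_cases hj : j ∈ support x
  · exact (hpos e' hx' j ((hP.2 j).lt_of_ne' hj)).le
  · exact hnn j hj

end LinearProgram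

theorem stmt11_general
    (A : Matrix (Fin m) (Fin d) ℝ)
    (b : Fin m → ℝ) (c : Fin d → ℝ) :
    ∃ ε : ℝ, 0 < ε ∧ ∀ btil : Fin m → ℝ,
      (feasSet A btil).Nonempty → ‖btil - b‖ < ε →
      ∀ e : Fin m → Fin d,
        PrimalFeasibleBasis A b e → DualFeasibleBasis A c e →
        ∃ e' : Fin m → Fin d,
          PrimalFeasibleBasis A b e' ∧ DualFeasibleBasis A c e' ∧
          basicSol A e' b = basicSol A e b ∧
          basicSol A e' btil ∈ optSet A btil c := by
  have key := fun e (h : PrimalFeasibleBasis A b e ∧ DualFeasibleBasis A c e) =>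
    eventually_exists_optimal_basicSol (c := c) h.1 h.2
  obtain ⟨ε, hε, hball⟩ := Metric.eventually_nhds_iff.1
    (Filter.eventually_all.2 fun e => Filter.eventually_imp_distrib_left.2 (key e))
  exact ⟨ε, hε, fun btil hfeas hdist e hP hD => hball (by rwa [dist_eq_norm]) e ⟨hP, hD⟩ hfeas⟩

/-- Lemma 4.5: assume `OPT(b)` is non-empty and bounded. Consider the
equivalence relation on the bases that are both primal and dual feasible given
by `j ~ k` iff `x(I_j, b) = x(I_k, b)`. Then there exists `ε > 0` such that for
every `b̃` with `P(b̃) ≠ ∅` and `‖b̃ − b‖ < ε`, every equivalence class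
(represented here by an arbitrary member `e`) contains a basis `e'` with
`x(e', b̃) ∈ OPT(b̃)`. -/
theorem stmt11 (hm : 1 ≤ m) (hmd : m ≤ d)
    (A : Matrix (Fin m) (Fin d) ℝ) (hA : A.rank = m)
    (b : Fin m → ℝ) (c : Fin d → ℝ)
    (hne : (optSet A b c).Nonempty) (hbd : Bornology.IsBounded (optSet A b c)) :
    ∃ ε : ℝ, 0 < ε ∧ ∀ btil : Fin m → ℝ,
      (feasSet A btil).Nonempty → ‖btil - b‖ < ε →
      ∀ e : Fin m → Fin d,
        PrimalFeasibleBasis A b e → DualFeasibleBasis A c e →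
        ∃ e' : Fin m → Fin d,
          PrimalFeasibleBasis A b e' ∧ DualFeasibleBasis A c e' ∧
          basicSol A e' b = basicSol A e b ∧
          basicSol A e' btil ∈ optSet A btil c :=
  stmt11_general A b c
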